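/- Let S be a monoid, A an S-act with no zero elements, B any S-act, z a one-point trivial S-act, and I a nonempty set. Then B ⊔ A^{(*)I} ⊔ z is geometrically equivalent to B ⊔ A ⊔ z, where A^{(*)I} is the coproduct of I copies of A. -/

import Mathlib

/-! The zero point makes the collapse harmless: for each index `i`, the map sending the `i`-th copy
of `A` identically onto `A`, every other copy to `z`, and fixing `B` and `z`, is a homomorphism,
and these maps jointly embed `B ⊔ A^{(*)I} ⊔ z` into a power of `B ⊔ A ⊔ z`. Conversely the
inclusion of one copy embeds `B ⊔ A ⊔ z` into `B ⊔ A^{(*)I} ⊔ z`. Mutual embeddings into powers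
give equal closures. -/

open Function

/-- The kernel of a map, as a set of pairs. -/
def actKer {A B : Type} (f : A → B) : Set (A × A) := {p | f p.1 = f p.2}

/-- A homomorphism of left `S`-acts is an `S`-equivariant map. -/
def IsActHom (S : Type) [Monoid S] {A B : Type} [MulAction S A] [MulAction S B]
    (f : A → B) : Prop := ∀ (s : S) (a : A), f (s • a) = s • f a

/-- The free left `S`-act on `n` generators: a coproduct of `n` copies of `S`. -/
def FreeAct (S : Type) (n : ℕ) : Type := Fin n × S

instance (S : Type) [Monoid S] (n : ℕ) : SMul S (FreeAct S n) :=
  ⟨fun s p => (p.1, s * p.2)⟩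

instance (S : Type) [Monoid S] (n : ℕ) : MulAction S (FreeAct S n) where
  one_smul p := show (p.1, 1 * p.2) = p by rw [one_mul]; rfl
  mul_smul s t p := show (p.1, (s * t) * p.2) = (p.1, s * (t * p.2)) by rw [mul_assoc]

/-- A congruence on an `S`-act: an equivalence relation compatible with the action. -/
def IsCongruence (S : Type) [Monoid S] {A : Type} [MulAction S A]
    (T : Set (A × A)) : Prop :=
  Equivalence (fun a b => (a, b) ∈ T) ∧
    ∀ (s : S) (a b : A), (a, b) ∈ T → (s • a, s • b) ∈ T

/-- The `G`-closure `T''` of a binary relation `T` on a free `S`-act: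
the intersection of the kernels of all homomorphisms into `G` whose kernel contains `T`. -/
def actClosure (S : Type) [Monoid S] (G : Type) [MulAction S G] {n : ℕ}
    (T : Set (FreeAct S n × FreeAct S n)) : Set (FreeAct S n × FreeAct S n) :=
  {p | ∀ f : FreeAct S n → G, IsActHom S f → T ⊆ actKer f → f p.1 = f p.2}

/-- `T` is a `G`-closed congruence: an intersection of kernels of a set of homomorphisms. -/
def GClosed (S : Type) [Monoid S] (G : Type) [MulAction S G] {n : ℕ}
    (T : Set (FreeAct S n × FreeAct S n)) : Prop :=
  ∃ A : Set (FreeAct S n → G), (∀ f ∈ A, IsActHom S f) ∧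
    T = {p | ∀ f ∈ A, f p.1 = f p.2}

/-- Geometric equivalence of `S`-acts. -/
def GeomEquiv (S : Type) [Monoid S] (G₁ G₂ : Type) [MulAction S G₁] [MulAction S G₂] : Prop :=
  ∀ (n : ℕ) (T : Set (FreeAct S n × FreeAct S n)),
    actClosure S G₁ T = actClosure S G₂ T

/-- Coproduct (disjoint union) action on `A ⊕ B`. -/
instance (S : Type) [Monoid S] {A B : Type} [MulAction S A] [MulAction S B] :
    SMul S (A ⊕ B) :=
  ⟨fun s x => match x with
    | Sum.inl a => Sum.inl (s • a)
    | Sum.inr b => Sum.inr (s • b)⟩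

instance (S : Type) [Monoid S] {A B : Type} [MulAction S A] [MulAction S B] :
    MulAction S (A ⊕ B) where
  one_smul x := by
    cases x with
    | inl a => show Sum.inl ((1 : S) • a) = _; rw [one_smul]
    | inr b => show Sum.inr ((1 : S) • b) = _; rw [one_smul]
  mul_smul s t x := by
    cases x with
    | inl a => show Sum.inl ((s * t) • a) = Sum.inl (s • t • a); rw [mul_smul]
    | inr b => show Sum.inr ((s * t) • b) = Sum.inr (s • t • b); rw [mul_smul]

/-- `Copies I A` is the coproduct of `I` copies of the `S`-act `A`. -/
def Copies (I A : Type) : Type := I × A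

instance (S : Type) [Monoid S] {I A : Type} [MulAction S A] : SMul S (Copies I A) :=
  ⟨fun s p => (p.1, s • p.2)⟩

instance (S : Type) [Monoid S] {I A : Type} [MulAction S A] : MulAction S (Copies I A) where
  one_smul p := show (p.1, (1 : S) • p.2) = p by rw [one_smul]; rfl
  mul_smul s t p := show (p.1, (s * t) • p.2) = (p.1, s • t • p.2) by rw [mul_smul]

section Closure

variable {S : Type} [Monoid S]

theorem isActHom_id {A : Type} [MulAction S A] : IsActHom S (id : A → A) := fun _ _ => rfl

theorem IsActHom.comp {A B C : Type} [MulAction S A] [MulAction S B] [MulAction S C]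
    {g : B → C} {f : A → B} (hg : IsActHom S g) (hf : IsActHom S f) : IsActHom S (g ∘ f) :=
  fun s a => by simp only [comp_apply, hf s a, hg s (f a)]

theorem IsActHom.sumMap {A B C D : Type} [MulAction S A] [MulAction S B] [MulAction S C]
    [MulAction S D] {f : A → C} {g : B → D} (hf : IsActHom S f) (hg : IsActHom S g) :
    IsActHom S (Sum.map f g)
  | s, Sum.inl a => congrArg Sum.inl (hf s a)
  | s, Sum.inr b => congrArg Sum.inr (hg s b)

theorem actClosure_subset_of_injective_pi {G H K : Type} [MulAction S G] [MulAction S H]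
    (φ : K → G → H) (hφ : ∀ k, IsActHom S (φ k)) (hinj : Injective fun x k => φ k x)
    {n : ℕ} (T : Set (FreeAct S n × FreeAct S n)) :
    actClosure S H T ⊆ actClosure S G T := fun _ hp f hf hT =>
  hinj <| funext fun k => hp (φ k ∘ f) ((hφ k).comp hf) fun _ hq => congrArg (φ k) (hT hq)

theorem geomEquiv_of_injective_pi {G H K L : Type} [MulAction S G] [MulAction S H]
    (φ : K → G → H) (hφ : ∀ k, IsActHom S (φ k)) (hφinj : Injective fun x k => φ k x)
    (ψ : L → H → G) (hψ : ∀ l, IsActHom S (ψ l)) (hψinj : Injective fun y l => ψ l y) :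
    GeomEquiv S G H := fun _ T =>
  (actClosure_subset_of_injective_pi ψ hψ hψinj T).antisymm
    (actClosure_subset_of_injective_pi φ hφ hφinj T)

end Closure

theorem injective_pi_sumMap {X Y X' Y' K : Type} [Nonempty K] {f : X → X'} (hf : Injective f)
    {g : K → Y → Y'} (hg : Injective fun y k => g k y) :
    Injective fun x k => Sum.map f (g k) x := by
  obtain ⟨k₀⟩ := ‹Nonempty K›
  rintro (x | y) (x' | y') h
  · exact congrArg Sum.inl (hf (Sum.inl_injective (congrFun h k₀)))
  · exact absurd (congrFun h k₀) Sum.inl_ne_inr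
  · exact absurd (congrFun h k₀) Sum.inr_ne_inl
  · exact congrArg Sum.inr (hg (funext fun k => Sum.inr_injective (congrFun h k)))

namespace Copies

variable {S : Type} [Monoid S] {I A : Type} [MulAction S A]

def inj (i : I) (a : A) : Copies I A := (i, a)

theorem isActHom_inj (i : I) : IsActHom S (inj (A := A) i) := fun _ _ => rfl

theorem inj_injective (i : I) : Injective (inj (A := A) i) := fun _ _ h =>
  congrArg Prod.snd h

def proj [DecidableEq I] (i : I) : Copies I A ⊕ PUnit → A ⊕ PUnit
  | Sum.inl p => if p.1 = i then Sum.inl p.2 else Sum.inr PUnit.unit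
  | Sum.inr _ => Sum.inr PUnit.unit

theorem isActHom_proj [DecidableEq I] (i : I) : IsActHom S (proj (A := A) i)
  | s, Sum.inl (j, a) => by
    change proj i (Sum.inl (j, s • a)) = s • proj i (Sum.inl (j, a))
    simp only [proj]
    split_ifs <;> rfl
  | _, Sum.inr _ => rfl

theorem injective_pi_proj [DecidableEq I] :
    Injective fun (x : Copies I A ⊕ PUnit) i => proj i x := by
  rintro (⟨i, a⟩ | ⟨⟩) (⟨j, b⟩ | ⟨⟩) h
  · have hi := congrFun h i
    by_cases hji : j = i
    · subst hji
      obtain rfl : a = b := by simpa [proj] using hi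
      rfl
    · simp [proj, hji] at hi
  · simpa [proj] using congrFun h i
  · simpa [proj] using congrFun h j
  · rfl

end Copies

theorem copies_plus_zero_geom_equiv_general
    (S : Type) [Monoid S] (A : Type) [MulAction S A]
    (B : Type) [MulAction S B] (I : Type) [Nonempty I] :
    GeomEquiv S (B ⊕ (Copies I A ⊕ PUnit)) (B ⊕ (A ⊕ PUnit)) := by
  classical
  obtain ⟨i₀⟩ := ‹Nonempty I›
  have hincl : Injective (Sum.map id (Sum.map (Copies.inj i₀) id) :
      B ⊕ (A ⊕ PUnit) → B ⊕ (Copies I A ⊕ PUnit)) :=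
    injective_id.sumMap ((Copies.inj_injective i₀).sumMap injective_id)
  exact geomEquiv_of_injective_pi
    (fun i => Sum.map id (Copies.proj i))
    (fun i => isActHom_id.sumMap (Copies.isActHom_proj i))
    (injective_pi_sumMap injective_id Copies.injective_pi_proj)
    (fun (_ : Unit) => Sum.map id (Sum.map (Copies.inj i₀) id))
    (fun _ => isActHom_id.sumMap
      ((Copies.isActHom_inj i₀).sumMap isActHom_id))
    fun _ _ h => hincl (congrFun h ())

/-- For an `S`-act `A` with no zero element, any `S`-act `B`, a one-point
trivial act `z`, and a nonempty set `I`, we have `B ⊔ A^{(*)I} ⊔ z ∼ B ⊔ A ⊔ z`. -/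
theorem copies_plus_zero_geom_equiv
    (S : Type) [Monoid S] (A : Type) [MulAction S A]
    (hA : ¬ ∃ a : A, ∀ s : S, s • a = a)
    (B : Type) [MulAction S B] (I : Type) [Nonempty I] :
    GeomEquiv S (B ⊕ (Copies I A ⊕ PUnit)) (B ⊕ (A ⊕ PUnit)) :=
  copies_plus_zero_geom_equiv_general S A B I
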